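/- Fix n ≥ 7 and let Σ_n be the graph complex defined in the context. Let G = {(1, χ_σ) ∈ ℤ × ({1,…,n} → ℤ) : σ a face of Σ_n}, where χ_σ is the 0/1 indicator vector of σ. Then the additive submonoid generated by G is not normal: there exists an element z of the subgroup generated by G that can be written as a finite nonnegative rational linear combination of elements of G but does not lie in the additive submonoid generated by G. -/

import Mathlib

/-- For `n ≥ 5`, the one-dimensional simplicial complex on the vertex set `{1, …, n}`
whose faces are the empty set, all singletons, the path edges `{i, i+1}` for
`1 ≤ i ≤ n-5`, and the edges `{n-4, n-3}`, `{n-4, n-2}`, `{n-3, n-2}`, `{1, n-1}`,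
`{1, n}`, `{n-1, n}` (a path whose two ends are completed to triangles). -/
def graphComplex (n : ℕ) : Set (Finset ℕ) :=
  {σ | σ = ∅ ∨ (∃ i, 1 ≤ i ∧ i ≤ n ∧ σ = {i}) ∨
       (∃ i, 1 ≤ i ∧ i ≤ n - 5 ∧ σ = {i, i + 1}) ∨
       σ = {n - 4, n - 3} ∨ σ = {n - 4, n - 2} ∨ σ = {n - 3, n - 2} ∨
       σ = {1, n - 1} ∨ σ = {1, n} ∨ σ = {n - 1, n}}

/-- The 0/1 indicator vector of a finset `σ ⊆ ℕ`. -/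
def indVec (σ : Finset ℕ) : ℕ → ℤ :=
  fun i => if i ∈ σ then 1 else 0

/-- The generating set `G = {(1, χ_σ) : σ a face of Σ_n}` inside `ℤ × (ℕ → ℤ)`. -/
def genSet (n : ℕ) : Set (ℤ × (ℕ → ℤ)) :=
  {p | ∃ σ ∈ graphComplex n, p = (1, indVec σ)}

/-- The embedding of the lattice `ℤ × (ℕ → ℤ)` into the `ℚ`-vector space
`ℚ × (ℕ → ℚ)`. -/
def toRat (p : ℤ × (ℕ → ℤ)) : ℚ × (ℕ → ℚ) :=
  ((p.1 : ℚ), fun i => (p.2 i : ℚ))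

lemma ind_pos {σ : Finset ℕ} {x : ℕ} (h : x ∈ σ) : indVec σ x = 1 := if_pos h

set_option maxHeartbeats 1600000 in
lemma gen_invariant (n : ℕ) (hn : 7 ≤ n) (σ : Finset ℕ) (hσ : σ ∈ graphComplex n) :
    (indVec σ 1 + indVec σ (n-1) + indVec σ n + indVec σ (n-4) + indVec σ (n-3) + indVec σ (n-2) ≤ 2)
    ∧ (indVec σ 1 + indVec σ (n-1) + indVec σ n + indVec σ (n-4) + indVec σ (n-3) + indVec σ (n-2) = 2 →
       (indVec σ 1 + indVec σ (n-1) + indVec σ n) % 2 = 0) := by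
  simp only [graphComplex, Set.mem_setOf_eq] at hσ
  rcases hσ with h | ⟨i, h1, h2, h⟩ | ⟨i, h1, h2, h⟩ | h | h | h | h | h | h <;> subst h
  · simp [indVec]
  all_goals (
    simp only [indVec, Finset.mem_insert, Finset.mem_singleton]
    split_ifs <;> omega)


set_option maxHeartbeats 1600000 in
/-- For `n ≥ 7`, the affine monoid generated by
`G = {(1, χ_σ) : σ a face of Σ_n}` is not normal: some element of the subgroup
generated by `G` is a finite nonnegative rational linear combination of elements of
`G` but does not lie in the additive monoid generated by `G`. -/
theorem graphComplex_monoid_not_normal (n : ℕ) (hn : 7 ≤ n) :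
    ∃ z : ℤ × (ℕ → ℤ), z ∈ AddSubgroup.closure (genSet n) ∧
      (∃ (k : ℕ) (g : Fin k → ℤ × (ℕ → ℤ)) (c : Fin k → ℚ),
        (∀ j, g j ∈ genSet n) ∧ (∀ j, 0 ≤ c j) ∧
        toRat z = ∑ j, c j • toRat (g j)) ∧
      z ∉ AddSubmonoid.closure (genSet n) := by
  refine ⟨((3 : ℤ), indVec {1, n-1, n, n-4, n-3, n-2}), ?_, ?_, ?_⟩
  · -- subgroup membership
    have hface : ∀ σ ∈ graphComplex n, ((1 : ℤ), indVec σ) ∈ AddSubgroup.closure (genSet n) :=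
      fun σ h => AddSubgroup.subset_closure ⟨σ, h, rfl⟩
    have h1 := hface {1} (Or.inr (Or.inl ⟨1, by omega, by omega, rfl⟩))
    have h2 := hface {n-1} (Or.inr (Or.inl ⟨n-1, by omega, by omega, rfl⟩))
    have h3 := hface {n} (Or.inr (Or.inl ⟨n, by omega, by omega, rfl⟩))
    have h4 := hface {n-4} (Or.inr (Or.inl ⟨n-4, by omega, by omega, rfl⟩))
    have h5 := hface {n-3} (Or.inr (Or.inl ⟨n-3, by omega, by omega, rfl⟩))
    have h6 := hface {n-2} (Or.inr (Or.inl ⟨n-2, by omega, by omega, rfl⟩))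
    have h0 := hface ∅ (Or.inl rfl)
    have key : ((3 : ℤ), indVec {1, n-1, n, n-4, n-3, n-2}) =
        (((1 : ℤ), indVec {1}) + ((1 : ℤ), indVec {n-1}) + ((1 : ℤ), indVec {n})
          + ((1 : ℤ), indVec {n-4}) + ((1 : ℤ), indVec {n-3})
          + ((1 : ℤ), indVec {n-2}))
        - (((1 : ℤ), indVec ∅) + ((1 : ℤ), indVec ∅) + ((1 : ℤ), indVec ∅)) := by
      apply Prod.ext
      · norm_num
      · funext x
        simp only [Prod.snd_add, Prod.snd_sub, Pi.add_apply, Pi.sub_apply, indVec,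
          Finset.mem_insert, Finset.mem_singleton, Finset.notMem_empty, ite_false]
        split_ifs <;> omega
    rw [key]
    exact sub_mem (add_mem (add_mem (add_mem (add_mem (add_mem h1 h2) h3) h4) h5) h6)
      (add_mem (add_mem h0 h0) h0)
  · -- rational combination
    refine ⟨6, ![((1 : ℤ), indVec {1, n-1}), ((1 : ℤ), indVec {1, n}), ((1 : ℤ), indVec {n-1, n}),
      ((1 : ℤ), indVec {n-4, n-3}), ((1 : ℤ), indVec {n-4, n-2}), ((1 : ℤ), indVec {n-3, n-2})],
      fun _ => 1/2, ?_, fun j => by norm_num, ?_⟩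
    · intro j
      fin_cases j
      · exact ⟨{1, n-1}, by right; right; right; right; right; right; left; rfl, rfl⟩
      · exact ⟨{1, n}, by right; right; right; right; right; right; right; left; rfl, rfl⟩
      · exact ⟨{n-1, n}, by right; right; right; right; right; right; right; right; rfl, rfl⟩
      · exact ⟨{n-4, n-3}, by right; right; right; left; rfl, rfl⟩
      · exact ⟨{n-4, n-2}, by right; right; right; right; left; rfl, rfl⟩
      · exact ⟨{n-3, n-2}, by right; right; right; right; right; left; rfl, rfl⟩
    · rw [Fin.sum_univ_six]
      show toRat ((3 : ℤ), indVec {1, n-1, n, n-4, n-3, n-2}) =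
        (1/2 : ℚ) • toRat ((1 : ℤ), indVec {1, n-1}) + (1/2 : ℚ) • toRat ((1 : ℤ), indVec {1, n})
        + (1/2 : ℚ) • toRat ((1 : ℤ), indVec {n-1, n})
        + (1/2 : ℚ) • toRat ((1 : ℤ), indVec {n-4, n-3})
        + (1/2 : ℚ) • toRat ((1 : ℤ), indVec {n-4, n-2})
        + (1/2 : ℚ) • toRat ((1 : ℤ), indVec {n-3, n-2})
      apply Prod.ext
      · simp [toRat]
        norm_num
      · funext x
        simp only [toRat, Prod.snd_add, Prod.smul_snd, Pi.add_apply, Pi.smul_apply,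
          smul_eq_mul, indVec, Finset.mem_insert, Finset.mem_singleton]
        split_ifs <;> (try norm_num) <;> omega
  · -- not in the monoid
    intro hmem
    have hP := AddSubmonoid.closure_induction
      (motive := fun x (_ : x ∈ AddSubmonoid.closure (genSet n)) =>
        (x.2 1 + x.2 (n-1) + x.2 n + x.2 (n-4) + x.2 (n-3) + x.2 (n-2) ≤ 2 * x.1)
        ∧ (x.2 1 + x.2 (n-1) + x.2 n + x.2 (n-4) + x.2 (n-3) + x.2 (n-2) = 2 * x.1 →
           (x.2 1 + x.2 (n-1) + x.2 n) % 2 = 0))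
      (fun p hp => by
        obtain ⟨σ, hσ, rfl⟩ := hp
        have := gen_invariant n hn σ hσ
        simpa using this)
      (by simp)
      (fun x y hx hy Px Py => by
        obtain ⟨ax, bx⟩ := Px
        obtain ⟨ay, by'⟩ := Py
        simp only [Prod.fst_add, Prod.snd_add, Pi.add_apply]
        constructor
        · omega
        · intro h
          have h1 : x.2 1 + x.2 (n-1) + x.2 n + x.2 (n-4) + x.2 (n-3) + x.2 (n-2) = 2 * x.1 := by
            omega
          have h2 : y.2 1 + y.2 (n-1) + y.2 n + y.2 (n-4) + y.2 (n-3) + y.2 (n-2) = 2 * y.1 := by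
            omega
          have := bx h1
          have := by' h2
          omega)
      hmem
    obtain ⟨hA, hB⟩ := hP
    have e1 : indVec {1, n-1, n, n-4, n-3, n-2} 1 = 1 := ind_pos (by simp)
    have e2 : indVec {1, n-1, n, n-4, n-3, n-2} (n-1) = 1 := ind_pos (by simp)
    have e3 : indVec {1, n-1, n, n-4, n-3, n-2} n = 1 := ind_pos (by simp)
    have e4 : indVec {1, n-1, n, n-4, n-3, n-2} (n-4) = 1 := ind_pos (by simp)
    have e5 : indVec {1, n-1, n, n-4, n-3, n-2} (n-3) = 1 := ind_pos (by simp)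
    have e6 : indVec {1, n-1, n, n-4, n-3, n-2} (n-2) = 1 := ind_pos (by simp)
    simp only [e1, e2, e3, e4, e5, e6] at hA hB
    omega
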